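/- arXiv:1608.00722 — 4 statements merged into one kernel-verified Lean document; each statement's English description precedes it below -/
import Mathlib

section
/- (Proposition 3.1, Type-I BPSK symbols.) Let P ≥ 0 and A ≥ 0. For every complex number z with |z|² = A, the probability that a real Gaussian random variable with mean 0 and variance 1/2 is smaller than −√P − Re(z) is at least 1/2 − (1/2)·erf(√A + √P); moreover, equality holds for the choice z = √A (a real spoofing signal aligned with the transmitted symbol). Formally: for all z : ℂ with Complex.abs z ^ 2 = A, ((gaussianReal 0 (1/2)) (Set.Iio (−√P − z.re))).toReal ≥ 1/2 − (1/2)·erf(√A + √P), with equality when z = (√A : ℂ). -/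
open MeasureTheory ProbabilityTheory Real Set

noncomputable def erf (x : ℝ) : ℝ :=
  (2 / Real.sqrt Real.pi) * ∫ t in (0:ℝ)..x, Real.exp (-t^2)

/-! The density of `gaussianReal 0 (1/2)` is `exp (-x²) / √π`, so its distribution function is
`1/2 + erf c / 2`. Since `Re z ≤ ‖z‖ = √A`, the event `{v < -√P - Re z}` contains
`{v < -(√A + √P)}`, whose probability is `1/2 - erf (√A + √P) / 2` by oddness of `erf`;
the aligned signal `z = √A` attains this bound. -/

lemma integrable_exp_neg_sq : Integrable fun x : ℝ => exp (-x ^ 2) := by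
  simpa using integrable_exp_neg_mul_sq one_pos

lemma integral_Iic_exp_neg_sq (c : ℝ) :
    ∫ x in Iic c, exp (-x ^ 2) = √π / 2 + ∫ t in (0 : ℝ)..c, exp (-t ^ 2) := by
  have h_half : ∫ x in Iic 0, exp (-x ^ 2) = √π / 2 := by
    rw [← neg_zero, ← integral_comp_neg_Ioi]
    simpa using integral_gaussian_Ioi 1
  rw [← h_half, ← intervalIntegral.integral_Iic_sub_Iic integrable_exp_neg_sq.integrableOn
    integrable_exp_neg_sq.integrableOn, add_sub_cancel]

lemma erf_neg (x : ℝ) : erf (-x) = -erf x := by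
  have h_even := intervalIntegral.integral_comp_neg (a := 0) (b := x) fun t => exp (-t ^ 2)
  simp only [neg_sq, neg_zero] at h_even
  rw [erf, erf, h_even, intervalIntegral.integral_symm, mul_neg]

lemma gaussianPDFReal_zero_half (x : ℝ) :
    gaussianPDFReal 0 (1 / 2) x = (√π)⁻¹ * exp (-x ^ 2) := by
  simp only [gaussianPDFReal, NNReal.coe_div, NNReal.coe_one, NNReal.coe_ofNat, sub_zero]
  ring_nf

lemma gaussianReal_zero_half_Iio (c : ℝ) :
    (gaussianReal 0 (1 / 2) (Iio c)).toReal = 1 / 2 + erf c / 2 := by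
  rw [gaussianReal_apply_eq_integral 0 (by norm_num),
    ENNReal.toReal_ofReal (integral_nonneg (gaussianPDFReal_nonneg 0 _)),
    setIntegral_congr_set Iio_ae_eq_Iic]
  simp_rw [gaussianPDFReal_zero_half]
  rw [integral_const_mul, integral_Iic_exp_neg_sq, erf]
  field_simp

theorem stmt_1_general (P A : ℝ) :
    (∀ z : ℂ, ‖z‖ ^ 2 = A →
       ((gaussianReal 0 (1/2)) (Set.Iio (-Real.sqrt P - z.re))).toReal ≥
         1/2 - (1/2) * erf (Real.sqrt A + Real.sqrt P)) ∧
    ((gaussianReal 0 (1/2))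
         (Set.Iio (-Real.sqrt P - ((Real.sqrt A : ℂ)).re))).toReal =
       1/2 - (1/2) * erf (Real.sqrt A + Real.sqrt P) := by
  have h_aligned : (gaussianReal 0 (1 / 2) (Iio (-√P - √A))).toReal
      = 1 / 2 - 1 / 2 * erf (√A + √P) := by
    rw [show -√P - √A = -(√A + √P) by ring, gaussianReal_zero_half_Iio, erf_neg]
    ring
  refine ⟨fun z hz => ?_, by simpa using h_aligned⟩
  have h_re : z.re ≤ √A := by
    rw [← hz, sqrt_sq (norm_nonneg z)]
    exact Complex.re_le_norm z
  rw [ge_iff_le, ← h_aligned]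
  exact ENNReal.toReal_mono (measure_ne_top _ _) (measure_mono (Iio_subset_Iio (by linarith)))

theorem stmt_1 (P A : ℝ) (hP : 0 ≤ P) (hA : 0 ≤ A) :
    (∀ z : ℂ, ‖z‖ ^ 2 = A →
       ((gaussianReal 0 (1/2)) (Set.Iio (-Real.sqrt P - z.re))).toReal ≥
         1/2 - (1/2) * erf (Real.sqrt A + Real.sqrt P)) ∧
    ((gaussianReal 0 (1/2))
         (Set.Iio (-Real.sqrt P - ((Real.sqrt A : ℂ)).re))).toReal =
       1/2 - (1/2) * erf (Real.sqrt A + Real.sqrt P) :=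
  stmt_1_general P A
end

section
/- (Proposition 3.2, Type-II BPSK symbols.) Let P ≥ 0 and B ≥ 0. For every complex number z with |z|² = B, the probability that a real Gaussian random variable with mean 0 and variance 1/2 is at least −√P − Re(z) is at least 1/2 − (1/2)·erf(√B − √P); moreover, equality holds for the choice z = −√B (a real spoofing signal opposite to the transmitted symbol). Formally: for all z : ℂ with Complex.abs z ^ 2 = B, ((gaussianReal 0 (1/2)) (Set.Ici (−√P − z.re))).toReal ≥ 1/2 − (1/2)·erf(√B − √P), with equality when z = (−√B : ℂ). -/
open MeasureTheory ProbabilityTheory Real Set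

lemma integral_Ioi_exp_neg_sq (a : ℝ) :
    ∫ x in Ioi a, exp (-x ^ 2) = √π / 2 - ∫ t in (0:ℝ)..a, exp (-t ^ 2) := by
  have hint : Integrable fun x : ℝ ↦ exp (-x ^ 2) := by
    simpa using integrable_exp_neg_mul_sq one_pos
  have half_line : ∫ x in Ioi (0:ℝ), exp (-x ^ 2) = √π / 2 := by
    simpa using integral_gaussian_Ioi 1
  rw [← half_line, ← intervalIntegral.integral_Ioi_sub_Ioi' hint.integrableOn hint.integrableOn]
  ring

lemma gaussianReal_zero_half_Ici (a : ℝ) :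
    (gaussianReal 0 (1 / 2) (Ici a)).toReal = 1 / 2 - 1 / 2 * erf a := by
  rw [gaussianReal_apply_eq_integral 0 (by norm_num),
    ENNReal.toReal_ofReal (integral_nonneg fun _ ↦ gaussianPDFReal_nonneg _ _ _),
    integral_Ici_eq_integral_Ioi]
  simp_rw [gaussianPDFReal_zero_half]
  rw [integral_const_mul, integral_Ioi_exp_neg_sq, erf]
  field_simp

theorem stmt_2_general (P B : ℝ) :
    (∀ z : ℂ, ‖z‖ ^ 2 = B →
       ((gaussianReal 0 (1/2)) (Set.Ici (-Real.sqrt P - z.re))).toReal ≥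
         1/2 - (1/2) * erf (Real.sqrt B - Real.sqrt P)) ∧
    ((gaussianReal 0 (1/2))
         (Set.Ici (-Real.sqrt P - ((-Real.sqrt B : ℂ)).re))).toReal =
       1/2 - (1/2) * erf (Real.sqrt B - Real.sqrt P) := by
  have neg_sqrt_le_re (z : ℂ) (hz : ‖z‖ ^ 2 = B) : -√B ≤ z.re := by
    rw [← hz, sqrt_sq (norm_nonneg z)]
    exact neg_le_of_abs_le (Complex.abs_re_le_norm z)
  refine ⟨fun z hz ↦ ?_, ?_⟩
  · rw [ge_iff_le, ← gaussianReal_zero_half_Ici]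
    have threshold_le : -√P - z.re ≤ √B - √P := by linarith [neg_sqrt_le_re z hz]
    exact ENNReal.toReal_mono (measure_ne_top _ _) (measure_mono (Ici_subset_Ici.mpr threshold_le))
  · rw [← gaussianReal_zero_half_Ici, Complex.neg_re, Complex.ofReal_re, sub_neg_eq_add,
      neg_add_eq_sub]

theorem stmt_2 (P B : ℝ) (hP : 0 ≤ P) (hB : 0 ≤ B) :
    (∀ z : ℂ, ‖z‖ ^ 2 = B →
       ((gaussianReal 0 (1/2)) (Set.Ici (-Real.sqrt P - z.re))).toReal ≥
         1/2 - (1/2) * erf (Real.sqrt B - Real.sqrt P)) ∧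
    ((gaussianReal 0 (1/2))
         (Set.Ici (-Real.sqrt P - ((-Real.sqrt B : ℂ)).re))).toReal =
       1/2 - (1/2) * erf (Real.sqrt B - Real.sqrt P) :=
  stmt_2_general P B
end

section
/- (Lemma 3.1.) Let P ≥ 0 and define f₁ : ℝ → ℝ by f₁(A) = 1/2 − (1/2)·erf(√A + √P). Then f₁ is monotonically decreasing on [0, ∞) (AntitoneOn f₁ (Set.Ici 0)) and convex on [0, ∞) (ConvexOn ℝ (Set.Ici 0) f₁). -/
open MeasureTheory ProbabilityTheory Real Set

/-! erf' = (2/√π)·exp(-x²) is positive and decreasing on [0, ∞), so erf is increasing and concave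
there. Composing with the concave increasing map A ↦ √A + √P keeps concavity, and f₁ is a decreasing
affine function of the result. -/

lemma erf_hasDerivAt (x : ℝ) : HasDerivAt erf (2 / √π * exp (-x ^ 2)) x :=
  ((by fun_prop : Continuous fun t : ℝ => exp (-t ^ 2)).integral_hasStrictDerivAt 0 x)
    |>.hasDerivAt.const_mul _

lemma erf_monotone : Monotone erf :=
  monotone_of_hasDerivAt_nonneg erf_hasDerivAt fun _ => by positivity

lemma erf_concaveOn_Ici : ConcaveOn ℝ (Ici 0) erf := by
  refine AntitoneOn.concaveOn_of_deriv (convex_Ici 0)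
    (fun x _ => (erf_hasDerivAt x).continuousAt.continuousWithinAt)
    (fun x _ => (erf_hasDerivAt x).differentiableAt.differentiableWithinAt) ?_
  rw [interior_Ici]
  intro x (hx : 0 < x) y _ hxy
  simp only [(erf_hasDerivAt _).deriv]
  have := hx.le
  gcongr

lemma image_sqrt_Ici_zero : (√·) '' Ici (0 : ℝ) = Ici 0 :=
  Subset.antisymm (image_subset_iff.mpr fun x _ => sqrt_nonneg x)
    fun x hx => ⟨x ^ 2, sq_nonneg x, sqrt_sq hx⟩

lemma concaveOn_erf_sqrt_add {c : ℝ} (hc : 0 ≤ c) :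
    ConcaveOn ℝ (Ici 0) fun A => erf (√A + c) := by
  have hshift : ConcaveOn ℝ (Ici 0) fun u => erf (u + c) :=
    (erf_concaveOn_Ici.translate_left c).subset
      (fun u (hu : 0 ≤ u) => show 0 ≤ c + u by positivity) (convex_Ici 0)
  rw [← image_sqrt_Ici_zero] at hshift
  exact hshift.comp strictConcaveOn_sqrt.concaveOn
    fun u _ v _ huv => erf_monotone (by linarith)

theorem stmt_3_general (P : ℝ)
    (f₁ : ℝ → ℝ) (hf₁ : ∀ A, f₁ A = 1/2 - (1/2) * erf (Real.sqrt A + Real.sqrt P)) :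
    AntitoneOn f₁ (Set.Ici 0) ∧ ConvexOn ℝ (Set.Ici 0) f₁ := by
  obtain rfl : f₁ = fun A => 1/2 - (1/2) * erf (√A + √P) := funext hf₁
  refine ⟨fun A _ B _ hAB => ?_, ?_⟩
  · have := erf_monotone (add_le_add_left (sqrt_le_sqrt hAB) (√P))
    dsimp only
    linarith
  · exact (convexOn_const (1/2) (convex_Ici 0)).sub
      ((concaveOn_erf_sqrt_add (sqrt_nonneg P)).smul (by norm_num : (0:ℝ) ≤ 1/2))

theorem stmt_3 (P : ℝ) (hP : 0 ≤ P)
    (f₁ : ℝ → ℝ) (hf₁ : ∀ A, f₁ A = 1/2 - (1/2) * erf (Real.sqrt A + Real.sqrt P)) :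
    AntitoneOn f₁ (Set.Ici 0) ∧ ConvexOn ℝ (Set.Ici 0) f₁ :=
  stmt_3_general P f₁ hf₁
end

section
/- (Lemma 3.2, low-power case.) Let 0 ≤ P ≤ 2 and define f₂ : ℝ → ℝ by f₂(B) = 1/2 − (1/2)·erf(√B − √P). Then f₂ is convex on [0, ∞) (ConvexOn ℝ (Set.Ici 0) f₂). -/
open MeasureTheory ProbabilityTheory Real Set

/-!
For `B > 0` the derivative of `B ↦ erf (√B - c)` is `π^(-1/2) · φ (√B)` with
`φ s = exp (-(s - c)²) / s`. Since `φ' s = -exp (-(s - c)²) (2 s² - 2 c s + 1) / s²` and the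
quadratic `2 s² - 2 c s + 1` has discriminant `4 (c² - 2) ≤ 0`, `φ` is antitone. Hence the
derivative is antitone and `B ↦ erf (√B - c)` is concave; `f₂` is an affine image of its
negative, with `c = √P`.
-/

theorem hasDerivAt_erf (x : ℝ) :
    HasDerivAt erf (2 / Real.sqrt Real.pi * Real.exp (-x ^ 2)) x := by
  have hcont : Continuous fun t : ℝ => Real.exp (-t ^ 2) := by fun_prop
  exact (hcont.integral_hasStrictDerivAt 0 x).hasDerivAt.const_mul _

theorem continuous_erf : Continuous erf :=
  continuous_iff_continuousAt.mpr fun x => (hasDerivAt_erf x).continuousAt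

theorem hasDerivAt_exp_neg_sq_sub_div {c s : ℝ} (hs : s ≠ 0) :
    HasDerivAt (fun s => Real.exp (-(s - c) ^ 2) / s)
      (-Real.exp (-(s - c) ^ 2) * (2 * s ^ 2 - 2 * c * s + 1) / s ^ 2) s := by
  have hsq : HasDerivAt (fun s => -(s - c) ^ 2) (-(2 * (s - c))) s := by
    simpa using (((hasDerivAt_id s).sub_const c).fun_pow 2).fun_neg
  refine (hsq.exp.fun_div (hasDerivAt_id' s) hs).congr_deriv ?_
  ring

theorem antitoneOn_exp_neg_sq_sub_div {c : ℝ} (hc : c ^ 2 ≤ 2) :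
    AntitoneOn (fun s => Real.exp (-(s - c) ^ 2) / s) (Ioi 0) := by
  have hderiv (s : ℝ) (hs : s ∈ Ioi (0 : ℝ)) := hasDerivAt_exp_neg_sq_sub_div (c := c) hs.ne'
  refine antitoneOn_of_deriv_nonpos (convex_Ioi 0)
    (fun s hs => (hderiv s hs).continuousAt.continuousWithinAt) ?_ ?_
  · rw [interior_Ioi]
    exact fun s hs => (hderiv s hs).differentiableAt.differentiableWithinAt
  · rw [interior_Ioi]
    intro s hs
    have hquad : 0 ≤ 2 * s ^ 2 - 2 * c * s + 1 := by nlinarith [sq_nonneg (2 * s - c)]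
    rw [(hderiv s hs).deriv, neg_mul, neg_div]
    exact neg_nonpos.mpr (by positivity)

theorem hasDerivAt_erf_sqrt_sub {c B : ℝ} (hB : 0 < B) :
    HasDerivAt (fun B => erf (Real.sqrt B - c))
      (1 / Real.sqrt Real.pi * (Real.exp (-(Real.sqrt B - c) ^ 2) / Real.sqrt B)) B := by
  have hsqrt := (Real.sqrt_pos.mpr hB).ne'
  refine ((hasDerivAt_erf _).comp B ((Real.hasDerivAt_sqrt hB.ne').sub_const c)).congr_deriv ?_
  field_simp

theorem concaveOn_erf_sqrt_sub {c : ℝ} (hc : c ^ 2 ≤ 2) :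
    ConcaveOn ℝ (Ici 0) fun B => erf (Real.sqrt B - c) := by
  have hderiv (B : ℝ) (hB : B ∈ Ioi (0 : ℝ)) := hasDerivAt_erf_sqrt_sub (c := c) hB
  refine AntitoneOn.concaveOn_of_deriv (convex_Ici 0)
    (continuous_erf.comp (Real.continuous_sqrt.sub continuous_const)).continuousOn ?_ ?_
  · rw [interior_Ici]
    exact fun B hB => (hderiv B hB).differentiableAt.differentiableWithinAt
  · rw [interior_Ici]
    intro x hx y hy hxy
    rw [(hderiv x hx).deriv, (hderiv y hy).deriv]
    have hφ := antitoneOn_exp_neg_sq_sub_div hc (Real.sqrt_pos.mpr hx) (Real.sqrt_pos.mpr hy)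
      (Real.sqrt_le_sqrt hxy)
    gcongr

theorem stmt_5 (P : ℝ) (hP0 : 0 ≤ P) (hP2 : P ≤ 2)
    (f₂ : ℝ → ℝ) (hf₂ : ∀ B, f₂ B = 1/2 - (1/2) * erf (Real.sqrt B - Real.sqrt P)) :
    ConvexOn ℝ (Set.Ici 0) f₂ := by
  have hc : Real.sqrt P ^ 2 ≤ 2 := by rwa [Real.sq_sqrt hP0]
  have hf₂_eq :
      f₂ = (fun B => (1 / 2 : ℝ) • -erf (Real.sqrt B - Real.sqrt P)) + fun _ => 1 / 2 := by
    funext B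
    simp only [hf₂, Pi.add_apply, smul_eq_mul]
    ring
  rw [hf₂_eq]
  exact ((concaveOn_erf_sqrt_sub hc).neg.smul (by norm_num)).add_const _
end
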